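/- Let M = (F, r) be a maniplex of rank n and let R(M) be its raviolo, a maniplex of rank n + 1. Then: R(M) is faithful if and only if M is faithful; R(M) is thin if and only if M is thin; R(M) satisfies the component intersection property if and only if M does; and if M is regular then R(M) is regular. -/

import Mathlib

/-- The orbit of a flag `u` under the subgroup generated by `{r j : j ∈ J}`. -/
def MOrbit {n : ℕ} {F : Type*} (r : Fin n → Equiv.Perm F) (J : Set (Fin n)) (u : F) :
    Set F :=
  {v | ∃ g ∈ Subgroup.closure (r '' J), v = g u}

/-- `(F, r)` is a maniplex of rank `n`. -/
def IsManiplex {F : Type*} (n : ℕ) (r : Fin n → Equiv.Perm F) : Prop :=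
  Nonempty F ∧
  (∀ (i : Fin n) (u : F), r i (r i u) = u) ∧
  (∀ (i : Fin n) (u : F), r i u ≠ u) ∧
  (∀ u v : F, v ∈ MOrbit r Set.univ u) ∧
  ∀ i j : Fin n, 1 < |(i : ℤ) - (j : ℤ)| →
    (∀ u : F, r i (r j (r i (r j u))) = u) ∧ ∀ u : F, r i (r j u) ≠ u

/-- The `i`-face containing the flag `u`. -/
def MFace {n : ℕ} {F : Type*} (r : Fin n → Equiv.Perm F) (i : Fin n) (u : F) : Set F :=
  MOrbit r {i}ᶜ u

/-- A maniplex is faithful if the intersection of all faces containing a flag is a singleton. -/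
def IsFaithful {n : ℕ} {F : Type*} (r : Fin n → Equiv.Perm F) : Prop :=
  ∀ u : F, (⋂ i : Fin n, MFace r i u) = {u}

/-- `O` is a face of rank `k ∈ {-1, …, n}`, where the improper ranks `-1` and `n`
give the whole flag set. -/
def IsRankFace {n : ℕ} {F : Type*} (r : Fin n → Equiv.Perm F) (k : ℤ) (O : Set F) : Prop :=
  ((∃ i : Fin n, (i : ℤ) = k) ∧ ∃ u : F, O = MOrbit r {j : Fin n | (j : ℤ) ≠ k} u) ∨
  ((¬ ∃ i : Fin n, (i : ℤ) = k) ∧ O = Set.univ)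

/-- A maniplex is thin if any incident pair of an `(i-1)`-face and `(i+1)`-face lies in
exactly two `i`-faces. -/
def IsThin {n : ℕ} {F : Type*} (r : Fin n → Equiv.Perm F) : Prop :=
  ∀ (i : Fin n) (Fm Fp : Set F),
    IsRankFace r ((i : ℤ) - 1) Fm → IsRankFace r ((i : ℤ) + 1) Fp →
    (Fm ∩ Fp).Nonempty →
    ∃ O₁ O₂ : Set F, O₁ ≠ O₂ ∧
      {O : Set F | (∃ u : F, O = MFace r i u) ∧ (O ∩ (Fm ∩ Fp)).Nonempty} = {O₁, O₂}

/-- The component intersection property. -/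
def HasCIP {n : ℕ} {F : Type*} (r : Fin n → Equiv.Perm F) : Prop :=
  ∀ (k : ℕ) (j : Fin k → Fin n) (H : Fin k → Set F),
    Function.Injective j →
    (∀ l, ∃ u : F, H l = MFace r (j l) u) →
    (∀ l m, (H l ∩ H m).Nonempty) →
    ∀ u v : F, u ∈ ⋂ l, H l → v ∈ ⋂ l, H l →
      v ∈ MOrbit r {m : Fin n | m ∉ Set.range j} u

/-- An automorphism of a maniplex: a permutation of the flags commuting with every `r i`. -/
def IsManiplexAuto {n : ℕ} {F : Type*} (r : Fin n → Equiv.Perm F) (φ : Equiv.Perm F) : Prop :=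
  ∀ (i : Fin n) (u : F), φ (r i u) = r i (φ u)

/-- A maniplex is regular if its automorphism group is transitive on flags. -/
def IsRegularManiplex {n : ℕ} {F : Type*} (r : Fin n → Equiv.Perm F) : Prop :=
  ∀ u v : F, ∃ φ : Equiv.Perm F, IsManiplexAuto r φ ∧ φ u = v

/-- A face `H`, an orbit of the subgroup generated by `{r j : j ∈ J}`, is bipartite. -/
def FaceBipartite {n : ℕ} {F : Type*} (r : Fin n → Equiv.Perm F) (J : Set (Fin n))
    (H : Set F) : Prop :=
  ∃ f : F → ZMod 2, ∀ j ∈ J, ∀ x ∈ H, f (r j x) = f x + 1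

/-- The number of `i`-faces of a maniplex. -/
noncomputable def NumFaces {n : ℕ} {F : Type*} (r : Fin n → Equiv.Perm F) (i : Fin n) : ℕ :=
  {O : Set F | ∃ u : F, O = MFace r i u}.ncard

/-- The canonical double cover of a maniplex. -/
def cdc {n : ℕ} {F : Type*} (r : Fin n → Equiv.Perm F) (i : Fin n) :
    Equiv.Perm (F × ZMod 2) :=
  Equiv.prodCongr (r i) (Equiv.addRight (1 : ZMod 2))

/-- The raviolo of a maniplex of rank `n`: a maniplex of rank `n+1` with two facets. -/
def raviolo {n : ℕ} {F : Type*} (r : Fin n → Equiv.Perm F) (i : Fin (n + 1)) :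
    Equiv.Perm (F × ZMod 2) :=
  if h : (i : ℕ) < n then Equiv.prodCongr (r ⟨i, h⟩) (Equiv.refl (ZMod 2))
  else Equiv.prodCongr (Equiv.refl F) (Equiv.addRight (1 : ZMod 2))

/-- A voltage assignment on a maniplex. -/
def IsVoltage {n : ℕ} {F : Type*} {G : Type*} [Group G] (r : Fin n → Equiv.Perm F)
    (ζ : F × Fin n → G) : Prop :=
  ∀ (u : F) (i : Fin n), ζ (r i u, i) = (ζ (u, i))⁻¹

/-- The permutations of the derived cover of a maniplex with voltage assignment `ζ`. -/
def mcov {n : ℕ} {F : Type*} {G : Type*} [Group G] (r : Fin n → Equiv.Perm F)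
    (ζ : F × Fin n → G) (i : Fin n) : Equiv.Perm (F × G) where
  toFun p := (r i p.1, ζ (p.1, i) * p.2)
  invFun p := ((r i).symm p.1, (ζ ((r i).symm p.1, i))⁻¹ * p.2)
  left_inv p := by simp
  right_inv p := by simp

section
variable {n : ℕ} {F : Type*} (r : Fin n → Equiv.Perm F)

def MStep (J : Set (Fin n)) (x y : F) : Prop := ∃ j ∈ J, y = r j x

lemma mstep_symm (hinv : ∀ i u, r i (r i u) = u) (J : Set (Fin n)) :
    Symmetric (MStep r J) := by
  rintro x y ⟨j, hj, rfl⟩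
  exact ⟨j, hj, (hinv j x).symm⟩

lemma mem_MOrbit_iff (hinv : ∀ i u, r i (r i u) = u) {J : Set (Fin n)} {u v : F} :
    v ∈ MOrbit r J u ↔ Relation.ReflTransGen (MStep r J) u v := by
  constructor
  · rintro ⟨g, hg, rfl⟩
    have key : ∀ g ∈ Subgroup.closure (r '' J), ∀ u : F,
        Relation.ReflTransGen (MStep r J) u (g u) := by
      intro g hg
      induction hg using Subgroup.closure_induction with
      | mem x hx =>
        obtain ⟨j, hj, rfl⟩ := hx
        exact fun u => Relation.ReflTransGen.single ⟨j, hj, rfl⟩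
      | one => exact fun u => Relation.ReflTransGen.refl
      | mul x y hx hy ihx ihy =>
        intro u
        have : (x * y) u = x (y u) := rfl
        rw [this]
        exact (ihy u).trans (ihx (y u))
      | inv x hx ih =>
        intro u
        have h1 := ih (x⁻¹ u)
        have h2 : x (x⁻¹ u) = u := by simp
        rw [h2] at h1
        exact (@Relation.ReflTransGen.symmetric _ _ ⟨fun a b h => mstep_symm r hinv J h⟩).symm _ _ h1
    exact key g hg u
  · intro h
    induction h with
    | refl => exact ⟨1, one_mem _, rfl⟩
    | tail _ hstep ih =>
      obtain ⟨g, hg, rfl⟩ := ih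
      obtain ⟨j, hj, rfl⟩ := hstep
      exact ⟨r j * g, mul_mem (Subgroup.subset_closure ⟨j, hj, rfl⟩) hg, rfl⟩

end



section
variable {n : ℕ} {F : Type*} (r : Fin n → Equiv.Perm F)

lemma raviolo_castSucc (i : Fin n) (p : F × ZMod 2) :
    raviolo r i.castSucc p = (r i p.1, p.2) := by
  have h : ((i.castSucc : Fin (n+1)) : ℕ) < n := i.isLt
  simp [raviolo, h, Fin.castSucc, Prod.map]

lemma raviolo_last (p : F × ZMod 2) :
    raviolo r (Fin.last n) p = (p.1, p.2 + 1) := by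
  simp [raviolo, Prod.map]

lemma two_eq_zero : (1 + 1 : ZMod 2) = 0 := by decide

lemma raviolo_inv (hinv : ∀ i u, r i (r i u) = u) (i : Fin (n + 1)) (p : F × ZMod 2) :
    raviolo r i (raviolo r i p) = p := by
  induction i using Fin.lastCases with
  | last => simp [raviolo_last, add_assoc, two_eq_zero]
  | cast j => simp [raviolo_castSucc, hinv]
end

section
variable {n : ℕ} {F : Type*} (r : Fin n → Equiv.Perm F)

lemma lift_reach {J : Set (Fin (n+1))} {u v : F} (a : ZMod 2)
    (h : Relation.ReflTransGen (MStep r (Fin.castSucc ⁻¹' J)) u v) :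
    Relation.ReflTransGen (MStep (raviolo r) J) (u, a) (v, a) := by
  induction h with
  | refl => exact Relation.ReflTransGen.refl
  | tail _ hstep ih =>
    obtain ⟨j, hj, rfl⟩ := hstep
    exact ih.tail ⟨j.castSucc, hj, by rw [raviolo_castSucc]⟩

lemma raviolo_MOrbit_last_mem (hinv : ∀ i u, r i (r i u) = u) {J : Set (Fin (n+1))}
    (hlast : Fin.last n ∈ J) (u : F) (a : ZMod 2) :
    MOrbit (raviolo r) J (u, a) =
      MOrbit r (Fin.castSucc ⁻¹' J) u ×ˢ (Set.univ : Set (ZMod 2)) := by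
  ext ⟨v, b⟩
  rw [mem_MOrbit_iff _ (raviolo_inv r hinv)]
  constructor
  · intro h
    suffices hs : ∀ p : F × ZMod 2,
        Relation.ReflTransGen (MStep (raviolo r) J) (u, a) p →
        p.1 ∈ MOrbit r (Fin.castSucc ⁻¹' J) u by
      exact Set.mk_mem_prod (hs _ h) (Set.mem_univ b)
    intro p hp
    induction hp with
    | refl => exact ⟨1, one_mem _, rfl⟩
    | tail _ hstep ih =>
      obtain ⟨i, hi, rfl⟩ := hstep
      induction i using Fin.lastCases with
      | last => rw [raviolo_last]; exact ih
      | cast j =>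
        rw [raviolo_castSucc]
        rw [mem_MOrbit_iff r hinv] at ih ⊢
        exact ih.tail ⟨j, hi, rfl⟩
  · rintro ⟨hv, -⟩
    have hv' : Relation.ReflTransGen (MStep r (Fin.castSucc ⁻¹' J)) u v := by
      rwa [← mem_MOrbit_iff r hinv]
    have h1 := lift_reach r a hv'
    rcases (show ∀ a b : ZMod 2, b = a ∨ b = a + 1 by decide) a b with rfl | rfl
    · exact h1
    · exact h1.tail ⟨Fin.last n, hlast, by rw [raviolo_last]⟩

lemma raviolo_MOrbit_last_not_mem (hinv : ∀ i u, r i (r i u) = u) {J : Set (Fin (n+1))}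
    (hlast : Fin.last n ∉ J) (u : F) (a : ZMod 2) :
    MOrbit (raviolo r) J (u, a) =
      MOrbit r (Fin.castSucc ⁻¹' J) u ×ˢ ({a} : Set (ZMod 2)) := by
  ext ⟨v, b⟩
  rw [mem_MOrbit_iff _ (raviolo_inv r hinv)]
  constructor
  · intro h
    suffices hs : ∀ p : F × ZMod 2,
        Relation.ReflTransGen (MStep (raviolo r) J) (u, a) p →
        p.1 ∈ MOrbit r (Fin.castSucc ⁻¹' J) u ∧ p.2 = a by
      obtain ⟨h1, h2⟩ := hs _ h
      exact Set.mk_mem_prod h1 h2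
    intro p hp
    induction hp with
    | refl => exact ⟨⟨1, one_mem _, rfl⟩, rfl⟩
    | tail _ hstep ih =>
      obtain ⟨i, hi, rfl⟩ := hstep
      induction i using Fin.lastCases with
      | last => exact absurd hi hlast
      | cast j =>
        rw [raviolo_castSucc]
        refine ⟨?_, ih.2⟩
        rw [mem_MOrbit_iff r hinv] at ih ⊢
        exact ih.1.tail ⟨j, hi, rfl⟩
  · rintro ⟨hv, hb⟩
    have hv' : Relation.ReflTransGen (MStep r (Fin.castSucc ⁻¹' J)) u v := by
      rwa [← mem_MOrbit_iff r hinv]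
    obtain rfl : b = a := hb
    exact lift_reach r _ hv'

end

section
variable {n : ℕ} {F : Type*} (r : Fin n → Equiv.Perm F)

lemma mem_MOrbit_self (J : Set (Fin n)) (u : F) : u ∈ MOrbit r J u :=
  ⟨1, one_mem _, rfl⟩

lemma MOrbit_univ (htrans : ∀ u v : F, v ∈ MOrbit r Set.univ u) (u : F) :
    MOrbit r Set.univ u = Set.univ := by
  ext v; simp [htrans u v]

lemma raviolo_MFace_castSucc (hinv : ∀ i u, r i (r i u) = u) (i : Fin n) (u : F) (a : ZMod 2) :
    MFace (raviolo r) i.castSucc (u, a) = MFace r i u ×ˢ (Set.univ : Set (ZMod 2)) := by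
  unfold MFace
  rw [raviolo_MOrbit_last_mem r hinv (by simp [Fin.ext_iff, Fin.val_last]; omega)]
  have hpre : Fin.castSucc ⁻¹' (({i.castSucc}ᶜ : Set (Fin (n+1)))) = ({i}ᶜ : Set (Fin n)) := by
    ext j; simp [Fin.castSucc_inj]
  rw [hpre]

lemma raviolo_MFace_last (hinv : ∀ i u, r i (r i u) = u)
    (htrans : ∀ u v : F, v ∈ MOrbit r Set.univ u) (u : F) (a : ZMod 2) :
    MFace (raviolo r) (Fin.last n) (u, a) = (Set.univ : Set F) ×ˢ ({a} : Set (ZMod 2)) := by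
  unfold MFace
  rw [raviolo_MOrbit_last_not_mem r hinv (by simp)]
  have h1 : Fin.castSucc ⁻¹' ({Fin.last n}ᶜ : Set (Fin (n+1))) = Set.univ := by
    ext j
    simp [Fin.ext_iff, Fin.val_last]
    omega
  rw [h1, MOrbit_univ r htrans]

lemma exists_fin_int (m : ℕ) (k : ℤ) : (∃ i : Fin m, (i : ℤ) = k) ↔ 0 ≤ k ∧ k < m := by
  constructor
  · rintro ⟨i, rfl⟩
    have := i.isLt
    constructor
    · positivity
    · exact_mod_cast this
  · rintro ⟨h0, hm⟩
    have hlt : k.toNat < m := by omega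
    refine ⟨⟨k.toNat, hlt⟩, ?_⟩
    simp
    omega

lemma prodUniv_injective :
    Function.Injective (fun X : Set F => X ×ˢ (Set.univ : Set (ZMod 2))) := by
  intro X Y h
  have h' : X ×ˢ (Set.univ : Set (ZMod 2)) = Y ×ˢ (Set.univ : Set (ZMod 2)) := h
  ext x
  constructor
  · intro hx
    have : (x, (0 : ZMod 2)) ∈ X ×ˢ (Set.univ : Set (ZMod 2)) := ⟨hx, trivial⟩
    rw [h'] at this
    exact this.1
  · intro hx
    have : (x, (0 : ZMod 2)) ∈ Y ×ˢ (Set.univ : Set (ZMod 2)) := ⟨hx, trivial⟩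
    rw [← h'] at this
    exact this.1

lemma prodFixed_inj {X Y : Set F} (a : ZMod 2)
    (h : X ×ˢ ({a} : Set (ZMod 2)) = Y ×ˢ ({a} : Set (ZMod 2))) : X = Y := by
  ext x
  constructor
  · intro hx
    have : (x, a) ∈ X ×ˢ ({a} : Set (ZMod 2)) := ⟨hx, rfl⟩
    rw [h] at this
    exact this.1
  · intro hx
    have : (x, a) ∈ Y ×ˢ ({a} : Set (ZMod 2)) := ⟨hx, rfl⟩
    rw [← h] at this
    exact this.1

lemma rankFace_raviolo_ne_n (hinv : ∀ i u, r i (r i u) = u) (k : ℤ) (hk : k ≠ (n : ℤ))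
    (O : Set (F × ZMod 2)) :
    IsRankFace (raviolo r) k O ↔
      ∃ X : Set F, IsRankFace r k X ∧ O = X ×ˢ (Set.univ : Set (ZMod 2)) := by
  have hpre : Fin.castSucc ⁻¹' {j : Fin (n+1) | (j : ℤ) ≠ k} = {j : Fin n | (j : ℤ) ≠ k} := by
    ext j; simp
  by_cases hp : 0 ≤ k ∧ k < (n : ℤ)
  · have hex : ∃ i : Fin n, (i : ℤ) = k := (exists_fin_int n k).mpr hp
    have hex' : ∃ i : Fin (n+1), (i : ℤ) = k := (exists_fin_int (n+1) k).mpr ⟨hp.1, by omega⟩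
    have hlast : Fin.last n ∈ {j : Fin (n+1) | (j : ℤ) ≠ k} := by
      simp [Fin.val_last]; omega
    constructor
    · rintro (⟨-, ⟨u, a⟩, rfl⟩ | ⟨hno, -⟩)
      · rw [raviolo_MOrbit_last_mem r hinv hlast, hpre]
        exact ⟨_, Or.inl ⟨hex, u, rfl⟩, rfl⟩
      · exact absurd hex' hno
    · rintro ⟨X, hX, rfl⟩
      rcases hX with ⟨-, u, rfl⟩ | ⟨hno, -⟩
      · refine Or.inl ⟨hex', (u, 0), ?_⟩
        rw [raviolo_MOrbit_last_mem r hinv hlast, hpre]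
      · exact absurd hex hno
  · have hnex : ¬ ∃ i : Fin n, (i : ℤ) = k := by rw [exists_fin_int]; omega
    have hnex' : ¬ ∃ i : Fin (n+1), (i : ℤ) = k := by rw [exists_fin_int]; push_cast; omega
    constructor
    · rintro (⟨hex', -⟩ | ⟨-, rfl⟩)
      · exact absurd hex' hnex'
      · exact ⟨Set.univ, Or.inr ⟨hnex, rfl⟩, by rw [Set.univ_prod_univ]⟩
    · rintro ⟨X, hX, rfl⟩
      rcases hX with ⟨hex, -⟩ | ⟨-, rfl⟩
      · exact absurd hex hnex
      · exact Or.inr ⟨hnex', by rw [Set.univ_prod_univ]⟩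

lemma rankFace_raviolo_n (hinv : ∀ i u, r i (r i u) = u)
    (htrans : ∀ u v : F, v ∈ MOrbit r Set.univ u) (hne : Nonempty F)
    (O : Set (F × ZMod 2)) :
    IsRankFace (raviolo r) (n : ℤ) O ↔
      ∃ a : ZMod 2, O = (Set.univ : Set F) ×ˢ ({a} : Set (ZMod 2)) := by
  have hlast : Fin.last n ∉ {j : Fin (n+1) | (j : ℤ) ≠ (n : ℤ)} := by
    simp [Fin.val_last]
  have hpre : Fin.castSucc ⁻¹' {j : Fin (n+1) | (j : ℤ) ≠ (n : ℤ)} = Set.univ := by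
    ext j
    have := j.isLt
    simp
    omega
  constructor
  · rintro (⟨-, ⟨u, a⟩, rfl⟩ | ⟨hno, -⟩)
    · rw [raviolo_MOrbit_last_not_mem r hinv hlast, hpre, MOrbit_univ r htrans]
      exact ⟨a, rfl⟩
    · refine absurd ⟨Fin.last n, ?_⟩ hno
      simp [Fin.val_last]
  · rintro ⟨a, rfl⟩
    obtain ⟨u⟩ := hne
    refine Or.inl ⟨⟨Fin.last n, by simp [Fin.val_last]⟩, (u, a), ?_⟩
    rw [raviolo_MOrbit_last_not_mem r hinv hlast, hpre, MOrbit_univ r htrans]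

lemma rankFace_nonempty (hne : Nonempty F) {k : ℤ} {X : Set F}
    (h : IsRankFace r k X) : X.Nonempty := by
  rcases h with ⟨-, u, rfl⟩ | ⟨-, rfl⟩
  · exact ⟨u, mem_MOrbit_self r _ u⟩
  · obtain ⟨u⟩ := hne
    exact ⟨u, trivial⟩

lemma rankFace_n (O : Set F) : IsRankFace r (n : ℤ) O ↔ O = Set.univ := by
  have hnex : ¬ ∃ i : Fin n, (i : ℤ) = (n : ℤ) := by
    rw [exists_fin_int]; omega
  constructor
  · rintro (⟨hex, -⟩ | ⟨-, rfl⟩)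
    · exact absurd hex hnex
    · rfl
  · rintro rfl
    exact Or.inr ⟨hnex, rfl⟩

end

section
variable {n : ℕ} {F : Type*} (r : Fin n → Equiv.Perm F)

lemma iInter_raviolo_faces (hinv : ∀ i u, r i (r i u) = u)
    (htrans : ∀ u v : F, v ∈ MOrbit r Set.univ u) (u : F) (a : ZMod 2) :
    (⋂ i : Fin (n+1), MFace (raviolo r) i (u, a)) =
      (⋂ i : Fin n, MFace r i u) ×ˢ ({a} : Set (ZMod 2)) := by
  ext ⟨v, b⟩
  simp only [Set.mem_iInter, Set.mem_prod]
  constructor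
  · intro h
    have hl := h (Fin.last n)
    rw [raviolo_MFace_last r hinv htrans] at hl
    refine ⟨fun i => ?_, hl.2⟩
    have hi := h i.castSucc
    rw [raviolo_MFace_castSucc r hinv] at hi
    exact hi.1
  · rintro ⟨hv, hb⟩ i
    induction i using Fin.lastCases with
    | last =>
      rw [raviolo_MFace_last r hinv htrans]
      exact ⟨trivial, hb⟩
    | cast j =>
      rw [raviolo_MFace_castSucc r hinv]
      exact ⟨hv j, trivial⟩

lemma faithful_iff (hinv : ∀ i u, r i (r i u) = u)
    (htrans : ∀ u v : F, v ∈ MOrbit r Set.univ u) :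
    IsFaithful (raviolo r) ↔ IsFaithful r := by
  constructor
  · intro h u
    have h0 := h (u, (0 : ZMod 2))
    rw [iInter_raviolo_faces r hinv htrans] at h0
    refine prodFixed_inj (0 : ZMod 2) ?_
    rw [h0, Set.singleton_prod_singleton]
  · rintro h ⟨u, a⟩
    rw [iInter_raviolo_faces r hinv htrans, h u, Set.singleton_prod_singleton]

lemma regular_raviolo (h : IsRegularManiplex r) : IsRegularManiplex (raviolo r) := by
  rintro ⟨u, a⟩ ⟨v, b⟩
  obtain ⟨φ, hφ, hu⟩ := h u v
  refine ⟨Equiv.prodCongr φ (Equiv.addRight (b - a)), ?_, ?_⟩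
  · intro i p
    induction i using Fin.lastCases with
    | last =>
      simp only [raviolo_last, Equiv.prodCongr_apply, Prod.map, Equiv.coe_addRight]
      rw [add_right_comm]
    | cast j =>
      simp only [raviolo_castSucc, Equiv.prodCongr_apply, Prod.map, Equiv.coe_addRight]
      rw [hφ j p.1]
  · simp [Prod.map, hu]

lemma raviolo_sol_set (hinv : ∀ i u, r i (r i u) = u) (i : Fin n)
    (A : Set F) (B : Set (ZMod 2)) (hB : B.Nonempty) :
    {O : Set (F × ZMod 2) | (∃ p : F × ZMod 2, O = MFace (raviolo r) i.castSucc p) ∧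
      (O ∩ (A ×ˢ B)).Nonempty}
    = (fun Y : Set F => Y ×ˢ (Set.univ : Set (ZMod 2))) ''
      {Y : Set F | (∃ u : F, Y = MFace r i u) ∧ (Y ∩ A).Nonempty} := by
  ext O
  simp only [Set.mem_setOf_eq, Set.mem_image]
  constructor
  · rintro ⟨⟨⟨u, a⟩, rfl⟩, hne⟩
    refine ⟨MFace r i u, ⟨⟨u, rfl⟩, ?_⟩, (raviolo_MFace_castSucc r hinv i u a).symm⟩
    rw [raviolo_MFace_castSucc r hinv, Set.prod_inter_prod, Set.prod_nonempty_iff] at hne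
    exact hne.1
  · rintro ⟨Y, ⟨⟨u, rfl⟩, hne⟩, rfl⟩
    refine ⟨⟨(u, 0), (raviolo_MFace_castSucc r hinv i u 0).symm⟩, ?_⟩
    rw [Set.prod_inter_prod, Set.prod_nonempty_iff]
    exact ⟨hne, by simpa using hB⟩

lemma thin_bridge (hinv : ∀ i u, r i (r i u) = u) (i : Fin n)
    (A C : Set F) (D : Set (ZMod 2)) (hD : D.Nonempty) :
    (∃ O₁ O₂ : Set (F × ZMod 2), O₁ ≠ O₂ ∧
      {O : Set (F × ZMod 2) | (∃ p : F × ZMod 2, O = MFace (raviolo r) i.castSucc p) ∧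
        (O ∩ ((A ×ˢ (Set.univ : Set (ZMod 2))) ∩ (C ×ˢ D))).Nonempty} = {O₁, O₂})
    ↔ (∃ O₁ O₂ : Set F, O₁ ≠ O₂ ∧
      {O : Set F | (∃ u : F, O = MFace r i u) ∧ (O ∩ (A ∩ C)).Nonempty} = {O₁, O₂}) := by
  have hinj : Function.Injective (fun Y : Set F => Y ×ˢ (Set.univ : Set (ZMod 2))) :=
    prodUniv_injective
  have hDne : ((Set.univ : Set (ZMod 2)) ∩ D).Nonempty := by simpa using hD
  have hset : {O : Set (F × ZMod 2) | (∃ p : F × ZMod 2, O = MFace (raviolo r) i.castSucc p) ∧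
        (O ∩ ((A ×ˢ (Set.univ : Set (ZMod 2))) ∩ (C ×ˢ D))).Nonempty}
      = (fun Y : Set F => Y ×ˢ (Set.univ : Set (ZMod 2))) ''
        {Y : Set F | (∃ u : F, Y = MFace r i u) ∧ (Y ∩ (A ∩ C)).Nonempty} := by
    rw [Set.prod_inter_prod]
    exact raviolo_sol_set r hinv i (A ∩ C) _ hDne
  rw [hset]
  constructor
  · rintro ⟨O₁, O₂, hne, hsol⟩
    have h1 : O₁ ∈ (fun Y : Set F => Y ×ˢ (Set.univ : Set (ZMod 2))) ''
        {Y : Set F | (∃ u : F, Y = MFace r i u) ∧ (Y ∩ (A ∩ C)).Nonempty} := by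
      rw [hsol]; exact Set.mem_insert _ _
    have h2 : O₂ ∈ (fun Y : Set F => Y ×ˢ (Set.univ : Set (ZMod 2))) ''
        {Y : Set F | (∃ u : F, Y = MFace r i u) ∧ (Y ∩ (A ∩ C)).Nonempty} := by
      rw [hsol]; exact Set.mem_insert_iff.mpr (Or.inr rfl)
    obtain ⟨Y₁, hY₁, hfY₁⟩ := h1
    obtain ⟨Y₂, hY₂, hfY₂⟩ := h2
    have hfY₁' : Y₁ ×ˢ (Set.univ : Set (ZMod 2)) = O₁ := hfY₁
    have hfY₂' : Y₂ ×ˢ (Set.univ : Set (ZMod 2)) = O₂ := hfY₂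
    refine ⟨Y₁, Y₂, fun hY => hne (by rw [← hfY₁', ← hfY₂', hY]), ?_⟩
    apply Set.image_injective.mpr hinj
    rw [hsol, Set.image_pair, ← hfY₁', ← hfY₂']
  · rintro ⟨Y₁, Y₂, hne, hsol⟩
    refine ⟨Y₁ ×ˢ Set.univ, Y₂ ×ˢ Set.univ, fun h => hne (hinj h), ?_⟩
    rw [hsol, Set.image_pair]

end

section
variable {n : ℕ} {F : Type*} (r : Fin n → Equiv.Perm F)

lemma thin_iff (hinv : ∀ i u, r i (r i u) = u)
    (htrans : ∀ u v : F, v ∈ MOrbit r Set.univ u) (hne : Nonempty F) :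
    IsThin (raviolo r) ↔ IsThin r := by
  constructor
  · -- raviolo thin → M thin
    intro h i Fm Fp hFm hFp hnep
    have hkm : ((i : ℤ) - 1) ≠ (n : ℤ) := by have := i.isLt; omega
    have hcast : ((i.castSucc : Fin (n+1)) : ℤ) = (i : ℤ) := by simp
    -- lift Fm
    have hFm' : IsRankFace (raviolo r) ((i : ℤ) - 1) (Fm ×ˢ (Set.univ : Set (ZMod 2))) :=
      (rankFace_raviolo_ne_n r hinv _ hkm _).mpr ⟨Fm, hFm, rfl⟩
    -- lift Fp, as Fp ×ˢ D
    obtain ⟨D, hD, hFp'⟩ : ∃ D : Set (ZMod 2), D.Nonempty ∧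
        IsRankFace (raviolo r) ((i : ℤ) + 1) (Fp ×ˢ D) := by
      by_cases hkp : ((i : ℤ) + 1) = (n : ℤ)
      · have hPu : Fp = Set.univ := by
          rw [hkp] at hFp
          exact (rankFace_n r Fp).mp hFp
        refine ⟨{0}, ⟨0, rfl⟩, ?_⟩
        rw [hkp, hPu]
        exact (rankFace_raviolo_n r hinv htrans hne _).mpr ⟨0, rfl⟩
      · exact ⟨Set.univ, ⟨0, trivial⟩,
          (rankFace_raviolo_ne_n r hinv _ hkp _).mpr ⟨Fp, hFp, rfl⟩⟩
    have hnep' : ((Fm ×ˢ (Set.univ : Set (ZMod 2))) ∩ (Fp ×ˢ D)).Nonempty := by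
      rw [Set.prod_inter_prod, Set.prod_nonempty_iff]
      exact ⟨hnep, by simpa using hD⟩
    have hthin := h i.castSucc (Fm ×ˢ Set.univ) (Fp ×ˢ D)
      (by rw [hcast]; exact hFm') (by rw [hcast]; exact hFp') hnep'
    exact (thin_bridge r hinv i Fm Fp D hD).mp hthin
  · -- M thin → raviolo thin
    intro h i Fm Fp hFm hFp hnep
    induction i using Fin.lastCases with
    | last =>
      -- the two i-faces are univ ×ˢ {0} and univ ×ˢ {1}
      obtain ⟨u₀⟩ := hne
      have hlc : ((Fin.last n : Fin (n+1)) : ℤ) = (n : ℤ) := by simp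
      rw [hlc] at hFm hFp
      -- Fm = A ×ˢ univ with A nonempty
      obtain ⟨A, hA, rfl⟩ := (rankFace_raviolo_ne_n r hinv _ (by omega) _).mp hFm
      obtain ⟨a₀, ha₀⟩ := rankFace_nonempty r ⟨u₀⟩ hA
      refine ⟨Set.univ ×ˢ {0}, Set.univ ×ˢ {1}, ?_, ?_⟩
      · intro hcon
        have : (u₀, (0 : ZMod 2)) ∈ (Set.univ : Set F) ×ˢ ({1} : Set (ZMod 2)) := by
          rw [← hcon]; exact ⟨trivial, rfl⟩
        have h2 : (0 : ZMod 2) = 1 := this.2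
        exact absurd h2 (by decide)
      · ext O
        simp only [Set.mem_setOf_eq, Set.mem_insert_iff, Set.mem_singleton_iff]
        constructor
        · rintro ⟨⟨⟨u, a⟩, rfl⟩, -⟩
          rw [raviolo_MFace_last r hinv htrans]
          rcases (show ∀ a : ZMod 2, a = 0 ∨ a = 1 by decide) a with rfl | rfl
          · exact Or.inl rfl
          · exact Or.inr rfl
        · have hmem : ∀ c : ZMod 2, ((Set.univ : Set F) ×ˢ ({c} : Set (ZMod 2)) ∈
              {O : Set (F × ZMod 2) | (∃ p : F × ZMod 2, O = MFace (raviolo r) (Fin.last n) p) ∧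
                (O ∩ ((A ×ˢ Set.univ) ∩ Fp)).Nonempty}) := by
            intro c
            refine ⟨⟨(u₀, c), (raviolo_MFace_last r hinv htrans u₀ c).symm⟩, ?_⟩
            -- Fp = univ since rank n+1 is improper
            have hPu : Fp = Set.univ := by
              rcases hFp with ⟨hex, -⟩ | ⟨-, rfl⟩
              · rw [exists_fin_int] at hex
                push_cast at hex
                omega
              · rfl
            refine ⟨(a₀, c), ⟨⟨trivial, rfl⟩, ?_⟩⟩
            rw [hPu]
            exact ⟨⟨ha₀, trivial⟩, trivial⟩
          rintro (rfl | rfl)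
          · exact hmem 0
          · exact hmem 1
    | cast i =>
      have hcast : ((i.castSucc : Fin (n+1)) : ℤ) = (i : ℤ) := by simp
      rw [hcast] at hFm hFp
      have hkm : ((i : ℤ) - 1) ≠ (n : ℤ) := by have := i.isLt; omega
      obtain ⟨A, hA, rfl⟩ := (rankFace_raviolo_ne_n r hinv _ hkm _).mp hFm
      obtain ⟨C, D, hD, hC, rfl⟩ : ∃ (C : Set F) (D : Set (ZMod 2)), D.Nonempty ∧
          IsRankFace r ((i : ℤ) + 1) C ∧ Fp = C ×ˢ D := by
        by_cases hkp : ((i : ℤ) + 1) = (n : ℤ)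
        · rw [hkp] at hFp ⊢
          obtain ⟨a, rfl⟩ := (rankFace_raviolo_n r hinv htrans hne _).mp hFp
          exact ⟨Set.univ, {a}, ⟨a, rfl⟩, (rankFace_n r _).mpr rfl, rfl⟩
        · obtain ⟨C, hC, rfl⟩ := (rankFace_raviolo_ne_n r hinv _ hkp _).mp hFp
          exact ⟨C, Set.univ, ⟨0, trivial⟩, hC, rfl⟩
      have hnep' : (A ∩ C).Nonempty := by
        rw [Set.prod_inter_prod, Set.prod_nonempty_iff] at hnep
        exact hnep.1
      exact (thin_bridge r hinv i A C D hD).mpr (h i A C hA hC hnep')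

end

section
variable {n : ℕ} {F : Type*} (r : Fin n → Equiv.Perm F)

lemma raviolo_MFace_castSucc' (hinv : ∀ i u, r i (r i u) = u) (i : Fin n) (p : F × ZMod 2) :
    MFace (raviolo r) i.castSucc p = MFace r i p.1 ×ˢ (Set.univ : Set (ZMod 2)) :=
  raviolo_MFace_castSucc r hinv i p.1 p.2

lemma raviolo_MFace_last' (hinv : ∀ i u, r i (r i u) = u)
    (htrans : ∀ u v : F, v ∈ MOrbit r Set.univ u) (p : F × ZMod 2) :
    MFace (raviolo r) (Fin.last n) p = (Set.univ : Set F) ×ˢ ({p.2} : Set (ZMod 2)) :=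
  raviolo_MFace_last r hinv htrans p.1 p.2

lemma cip_iff (hinv : ∀ i u, r i (r i u) = u)
    (htrans : ∀ u v : F, v ∈ MOrbit r Set.univ u) :
    HasCIP (raviolo r) ↔ HasCIP r := by
  constructor
  · -- raviolo CIP → M CIP
    intro h k j H hj hface hpair u v hu hv
    choose w hw using hface
    have hcip := h k (fun l => (j l).castSucc) (fun l => H l ×ˢ (Set.univ : Set (ZMod 2)))
      ((Fin.castSucc_injective n).comp hj)
      (fun l => ⟨(w l, 0), by
        show H l ×ˢ (Set.univ : Set (ZMod 2)) = _
        rw [hw l]; exact (raviolo_MFace_castSucc r hinv _ _ _).symm⟩)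
      (fun l m => by
        show ((H l ×ˢ (Set.univ : Set (ZMod 2))) ∩ (H m ×ˢ Set.univ)).Nonempty
        rw [Set.prod_inter_prod, Set.prod_nonempty_iff]
        exact ⟨hpair l m, ⟨0, trivial, trivial⟩⟩)
      (u, 0) (v, 0)
      (Set.mem_iInter.mpr fun l => ⟨Set.mem_iInter.mp hu l, trivial⟩)
      (Set.mem_iInter.mpr fun l => ⟨Set.mem_iInter.mp hv l, trivial⟩)
    have hlast : Fin.last n ∈ {m : Fin (n+1) | m ∉ Set.range (fun l => (j l).castSucc)} := by
      rintro ⟨l, hl⟩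
      exact absurd (congrArg Fin.val hl) (by simp [Fin.val_last]; omega)
    rw [raviolo_MOrbit_last_mem r hinv hlast] at hcip
    have hpre : Fin.castSucc ⁻¹' {m : Fin (n+1) | m ∉ Set.range (fun l => (j l).castSucc)}
        = {m : Fin n | m ∉ Set.range j} := by
      ext m
      simp only [Set.mem_preimage, Set.mem_setOf_eq, Set.mem_range]
      constructor
      · intro hm ⟨l, hl⟩
        exact hm ⟨l, by rw [hl]⟩
      · intro hm ⟨l, hl⟩
        exact hm ⟨l, Fin.castSucc_injective n hl⟩
    rw [hpre] at hcip
    exact hcip.1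
  · -- M CIP → raviolo CIP
    rintro h k j H hj hface hpair ⟨u, a⟩ ⟨v, b⟩ hu hv
    choose w hw using hface
    by_cases hlr : Fin.last n ∈ Set.range j
    · -- last rank is among the faces
      obtain ⟨l₀, hl₀⟩ := hlr
      -- k = k' + 1
      rcases k with - | k'
      · exact l₀.elim0
      -- a = b
      have hmema := Set.mem_iInter.mp hu l₀
      have hmemb := Set.mem_iInter.mp hv l₀
      rw [hw l₀, hl₀, raviolo_MFace_last' r hinv htrans] at hmema hmemb
      have hab : b = a := by
        have h1 : a = (w l₀).2 := hmema.2
        have h2 : b = (w l₀).2 := hmemb.2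
        rw [h1, h2]
      -- the other faces
      have hne_last : ∀ m : Fin k', j (l₀.succAbove m) ≠ Fin.last n := by
        intro m hcon
        exact absurd (hj (hcon.trans hl₀.symm)) (Fin.succAbove_ne l₀ m)
      have hlt : ∀ m : Fin k', ((j (l₀.succAbove m)) : ℕ) < n :=
        fun m => Fin.val_lt_last (hne_last m)
      set j' : Fin k' → Fin n := fun m => ⟨(j (l₀.succAbove m)), hlt m⟩ with hj'def
      have hj'cast : ∀ m, (j' m).castSucc = j (l₀.succAbove m) := fun m => Fin.ext rfl
      have hj' : Function.Injective j' := by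
        intro m₁ m₂ hm
        have : j (l₀.succAbove m₁) = j (l₀.succAbove m₂) := by
          rw [← hj'cast, ← hj'cast, hm]
        exact Fin.succAbove_right_injective (hj this)
      have hH : ∀ m : Fin k', H (l₀.succAbove m)
          = MFace r (j' m) (w (l₀.succAbove m)).1 ×ˢ (Set.univ : Set (ZMod 2)) := by
        intro m
        rw [hw, ← hj'cast m, raviolo_MFace_castSucc' r hinv]
      have hcip := h k' j' (fun m => MFace r (j' m) (w (l₀.succAbove m)).1) hj'
        (fun m => ⟨(w (l₀.succAbove m)).1, rfl⟩)
        (fun m₁ m₂ => by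
          have := hpair (l₀.succAbove m₁) (l₀.succAbove m₂)
          rw [hH m₁, hH m₂, Set.prod_inter_prod, Set.prod_nonempty_iff] at this
          exact this.1)
        u v
        (Set.mem_iInter.mpr fun m => by
          have := Set.mem_iInter.mp hu (l₀.succAbove m)
          rw [hH m] at this
          exact this.1)
        (Set.mem_iInter.mpr fun m => by
          have := Set.mem_iInter.mp hv (l₀.succAbove m)
          rw [hH m] at this
          exact this.1)
      have hlast : Fin.last n ∉ {m : Fin (n+1) | m ∉ Set.range j} := by
        simp only [Set.mem_setOf_eq, not_not]
        exact ⟨l₀, hl₀⟩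
      rw [raviolo_MOrbit_last_not_mem r hinv hlast]
      have hpre : Fin.castSucc ⁻¹' {m : Fin (n+1) | m ∉ Set.range j}
          = {m : Fin n | m ∉ Set.range j'} := by
        ext m
        simp only [Set.mem_preimage, Set.mem_setOf_eq, Set.mem_range]
        constructor
        · intro hm ⟨m', hm'⟩
          exact hm ⟨l₀.succAbove m', by rw [← hj'cast, hm']⟩
        · intro hm ⟨l, hl⟩
          have hlne : l ≠ l₀ := by
            intro hcon
            rw [hcon, hl₀] at hl
            exact absurd (congrArg Fin.val hl) (by simp [Fin.val_last]; omega)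
          obtain ⟨m', rfl⟩ := Fin.exists_succAbove_eq hlne
          refine hm ⟨m', ?_⟩
          have : (j' m').castSucc = m.castSucc := by rw [hj'cast, hl]
          exact Fin.castSucc_injective n this
      rw [hpre]
      exact ⟨hcip, hab⟩
    · -- last rank is not among the faces
      have hlt : ∀ l, ((j l) : ℕ) < n :=
        fun l => Fin.val_lt_last (fun hcon => hlr ⟨l, hcon⟩)
      set j' : Fin k → Fin n := fun l => ⟨(j l), hlt l⟩ with hj'def
      have hj'cast : ∀ l, (j' l).castSucc = j l := fun l => Fin.ext rfl
      have hj' : Function.Injective j' := by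
        intro m₁ m₂ hm
        apply hj
        rw [← hj'cast, ← hj'cast, hm]
      have hH : ∀ l, H l = MFace r (j' l) (w l).1 ×ˢ (Set.univ : Set (ZMod 2)) := by
        intro l
        rw [hw, ← hj'cast l, raviolo_MFace_castSucc' r hinv]
      have hcip := h k j' (fun l => MFace r (j' l) (w l).1) hj'
        (fun l => ⟨(w l).1, rfl⟩)
        (fun m₁ m₂ => by
          have := hpair m₁ m₂
          rw [hH m₁, hH m₂, Set.prod_inter_prod, Set.prod_nonempty_iff] at this
          exact this.1)
        u v
        (Set.mem_iInter.mpr fun l => by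
          have := Set.mem_iInter.mp hu l
          rw [hH l] at this
          exact this.1)
        (Set.mem_iInter.mpr fun l => by
          have := Set.mem_iInter.mp hv l
          rw [hH l] at this
          exact this.1)
      have hlast : Fin.last n ∈ {m : Fin (n+1) | m ∉ Set.range j} := hlr
      rw [raviolo_MOrbit_last_mem r hinv hlast]
      have hpre : Fin.castSucc ⁻¹' {m : Fin (n+1) | m ∉ Set.range j}
          = {m : Fin n | m ∉ Set.range j'} := by
        ext m
        simp only [Set.mem_preimage, Set.mem_setOf_eq, Set.mem_range]
        constructor
        · intro hm ⟨l, hl⟩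
          exact hm ⟨l, by rw [← hj'cast, hl]⟩
        · intro hm ⟨l, hl⟩
          refine hm ⟨l, ?_⟩
          have : (j' l).castSucc = m.castSucc := by rw [hj'cast, hl]
          exact Fin.castSucc_injective n this
      rw [hpre]
      exact ⟨hcip, trivial⟩

end

/-- The raviolo of a maniplex is faithful, thin, resp. has the CIP, iff the maniplex does,
and the raviolo of a regular maniplex is regular. -/
theorem stmt16 {n : ℕ} {F : Type*} [Fintype F] (r : Fin n → Equiv.Perm F)
    (hM : IsManiplex n r) :
    (IsFaithful (raviolo r) ↔ IsFaithful r) ∧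
    (IsThin (raviolo r) ↔ IsThin r) ∧
    (HasCIP (raviolo r) ↔ HasCIP r) ∧
    (IsRegularManiplex r → IsRegularManiplex (raviolo r)) := by
  obtain ⟨hne, hinv, -, htrans, -⟩ := hM
  exact ⟨faithful_iff r hinv htrans, thin_iff r hinv htrans hne,
    cip_iff r hinv htrans, regular_raviolo r⟩
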